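/- Let α ∈ (0,1) and λ, ρ > 0. For every x > 0, the function x ↦ E_{α, ρ/α, ρ/α − 1}(−λ x^ρ) is differentiable at x, the series Σ_{n≥0} (∏_{j=0}^{n} Γ(jρ + ρ + 1 − α)/Γ(jρ + ρ)) (−λ x^ρ)^n/(ρ^n n!) converges, and −d/dx [E_{α, ρ/α, ρ/α − 1}(−λ x^ρ)] = λ x^{ρ−1} Σ_{n≥0} (∏_{j=0}^{n} Γ(jρ + ρ + 1 − α)/Γ(jρ + ρ)) (−λ x^ρ)^n/(ρ^n n!). -/

import Mathlib

open Filter Set Topology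

private lemma gamma_ratio_le {a x : ℝ} (ha : 0 < a) (ha1 : a < 1) (hx : 0 < x) :
    Real.Gamma (x + 1 - a) / Real.Gamma (x + 1) ≤ x ^ (-a) := by
  have hx1 : (0:ℝ) < x + 1 := by linarith
  have hxa : (0:ℝ) < x + 1 - a := by linarith
  have hG : 0 < Real.Gamma x := Real.Gamma_pos_of_pos hx
  have hG1 : 0 < Real.Gamma (x + 1) := Real.Gamma_pos_of_pos hx1
  have hGa : 0 < Real.Gamma (x + 1 - a) := Real.Gamma_pos_of_pos hxa
  have h := Real.convexOn_log_Gamma.2 (mem_Ioi.mpr hx) (mem_Ioi.mpr hx1) ha.le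
    (by linarith : (0:ℝ) ≤ 1 - a) (by ring)
  have heq : a • x + (1 - a) • (x + 1) = x + 1 - a := by
    simp only [smul_eq_mul]; ring
  rw [heq] at h
  simp only [Function.comp_apply, smul_eq_mul] at h
  have h2 : Real.Gamma (x + 1 - a) ≤ Real.Gamma x ^ a * Real.Gamma (x + 1) ^ (1 - a) := by
    have h3 := Real.exp_le_exp.mpr h
    rw [mul_comm a, mul_comm (1 - a)] at h3
    rwa [Real.exp_log hGa, Real.exp_add, ← Real.rpow_def_of_pos hG,
      ← Real.rpow_def_of_pos hG1] at h3
  rw [div_le_iff₀ hG1]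
  refine h2.trans_eq ?_
  rw [Real.Gamma_add_one hx.ne', show (1:ℝ) - a = 1 + -a by ring,
    Real.mul_rpow hx.le hG.le, Real.rpow_add hx, Real.rpow_add hG, Real.rpow_one, Real.rpow_one]
  have h4 : Real.Gamma x ^ a * Real.Gamma x ^ (-a) = 1 := by
    rw [← Real.rpow_add hG]; simp
  calc Real.Gamma x ^ a * (x * x ^ (-a) * (Real.Gamma x * Real.Gamma x ^ (-a)))
      = (Real.Gamma x ^ a * Real.Gamma x ^ (-a)) * (x ^ (-a) * (x * Real.Gamma x)) := by ring
    _ = x ^ (-a) * (x * Real.Gamma x) := by rw [h4, one_mul]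

private noncomputable def KSc (α ρ : ℝ) : ℕ → ℝ := fun n =>
  ∏ k ∈ Finset.range n,
    Real.Gamma ((k : ℝ) * ρ + ρ + 1 - α) / Real.Gamma ((k : ℝ) * ρ + ρ + 1)

private noncomputable def Rq (α ρ : ℝ) (n : ℕ) : ℝ :=
  Real.Gamma ((n : ℝ) * ρ + ρ + 1 - α) / Real.Gamma ((n : ℝ) * ρ + ρ + 1)

private lemma arg_pos {ρ : ℝ} (hρ : 0 < ρ) (k : ℕ) : 0 < (k : ℝ) * ρ + ρ := by
  have : (0:ℝ) ≤ (k : ℝ) * ρ := by positivity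
  linarith

private lemma KSc_pos {α ρ : ℝ} (hα1 : α < 1) (hρ : 0 < ρ) (n : ℕ) : 0 < KSc α ρ n := by
  refine Finset.prod_pos fun k _ => div_pos ?_ ?_
  · exact Real.Gamma_pos_of_pos (by have := arg_pos hρ k; linarith)
  · exact Real.Gamma_pos_of_pos (by have := arg_pos hρ k; linarith)

private lemma Rq_nonneg {α ρ : ℝ} (hα1 : α < 1) (hρ : 0 < ρ) (n : ℕ) : 0 ≤ Rq α ρ n := by
  refine le_of_lt (div_pos ?_ ?_)
  · exact Real.Gamma_pos_of_pos (by have := arg_pos hρ n; linarith)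
  · exact Real.Gamma_pos_of_pos (by have := arg_pos hρ n; linarith)

private lemma KSc_succ (α ρ : ℝ) (n : ℕ) :
    KSc α ρ (n + 1) = KSc α ρ n * Rq α ρ n :=
  Finset.prod_range_succ _ _

private lemma Rq_tendsto {α ρ : ℝ} (hα0 : 0 < α) (hα1 : α < 1) (hρ : 0 < ρ) :
    Tendsto (Rq α ρ) atTop (𝓝 0) := by
  have hle : ∀ n : ℕ, Rq α ρ n ≤ ((n : ℝ) * ρ + ρ) ^ (-α) := fun n =>
    gamma_ratio_le hα0 hα1 (arg_pos hρ n)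
  refine squeeze_zero (Rq_nonneg hα1 hρ) hle ?_
  refine (tendsto_rpow_neg_atTop hα0).comp ?_
  exact tendsto_atTop_add_const_right _ ρ (tendsto_natCast_atTop_atTop.atTop_mul_const hρ)

private lemma key_prod {α ρ : ℝ} (hα1 : α < 1) (hρ : 0 < ρ) (n : ℕ) :
    (∏ j ∈ Finset.range (n + 1),
        Real.Gamma ((j : ℝ) * ρ + ρ + 1 - α) / Real.Gamma ((j : ℝ) * ρ + ρ))
      = KSc α ρ (n + 1) * (ρ ^ (n + 1) * ((n + 1).factorial : ℝ)) := by
  induction n with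
  | zero =>
      have h0 : ((0:ℕ) : ℝ) * ρ + ρ ≠ 0 := (arg_pos hρ 0).ne'
      have hG : Real.Gamma (((0:ℕ) : ℝ) * ρ + ρ) ≠ 0 :=
        (Real.Gamma_pos_of_pos (arg_pos hρ 0)).ne'
      simp only [zero_add, Finset.prod_range_one, KSc]
      rw [Real.Gamma_add_one h0]
      field_simp
      ring
  | succ n ih =>
      have hpos := arg_pos hρ (n + 1)
      have hG : Real.Gamma (((n+1:ℕ) : ℝ) * ρ + ρ) ≠ 0 :=
        (Real.Gamma_pos_of_pos hpos).ne'
      rw [Finset.prod_range_succ, ih, KSc_succ α ρ (n+1), Rq, Real.Gamma_add_one hpos.ne',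
        Nat.factorial_succ (n+1)]
      have hG' : Real.Gamma (((n:ℝ) + 1) * ρ + ρ) ≠ 0 := by push_cast at hG; exact hG
      have hpos' : ((n:ℝ) + 1) * ρ + ρ ≠ 0 := by push_cast at hpos; exact hpos.ne'
      push_cast
      field_simp
      ring

private noncomputable def ubd (α ρ B D : ℝ) (n : ℕ) : ℝ :=
  KSc α ρ n * ((n : ℝ) * B ^ (n - 1) * D)

private lemma ubd_succ (α ρ B D : ℝ) (n : ℕ) :
    ubd α ρ B D (n + 1) = KSc α ρ (n + 1) * (((n : ℝ) + 1) * B ^ n * D) := by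
  simp only [ubd, Nat.add_sub_cancel]
  push_cast
  ring

private lemma ubd_nonneg {α ρ B D : ℝ} (hα1 : α < 1) (hρ : 0 < ρ) (hB : 0 ≤ B) (hD : 0 ≤ D)
    (n : ℕ) : 0 ≤ ubd α ρ B D n :=
  mul_nonneg (KSc_pos hα1 hρ n).le
    (mul_nonneg (mul_nonneg (Nat.cast_nonneg n) (pow_nonneg hB _)) hD)

private lemma ubd_summable {α ρ B D : ℝ} (hα0 : 0 < α) (hα1 : α < 1) (hρ : 0 < ρ)
    (hB : 0 < B) (hD : 0 < D) : Summable (ubd α ρ B D) := by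
  refine summable_of_ratio_norm_eventually_le (r := 1/2) (by norm_num) ?_
  have hev : ∀ᶠ n : ℕ in atTop, Rq α ρ n < (4 * (B + 1))⁻¹ :=
    (Rq_tendsto hα0 hα1 hρ).eventually_lt_const (by rw [inv_pos]; linarith)
  filter_upwards [hev, eventually_ge_atTop 1] with n hn hn1
  obtain ⟨m, rfl⟩ : ∃ m, n = m + 1 := ⟨n - 1, (Nat.succ_pred_eq_of_pos hn1).symm⟩
  have hm0 : (0:ℝ) ≤ (m:ℝ) := Nat.cast_nonneg m
  have h2 : ((m:ℝ) + 1) + 1 ≤ 2 * ((m:ℝ) + 1) := by linarith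
  have hinv : (0:ℝ) ≤ (4 * (B + 1))⁻¹ := by rw [inv_nonneg]; linarith
  have key : Rq α ρ (m+1) * ((((m:ℝ) + 1) + 1) * B) ≤ 1/2 * ((m:ℝ) + 1) := by
    calc Rq α ρ (m+1) * ((((m:ℝ) + 1) + 1) * B)
        ≤ (4 * (B + 1))⁻¹ * ((2 * ((m:ℝ) + 1)) * (B + 1)) := by
          refine mul_le_mul hn.le
            (mul_le_mul h2 (by linarith) hB.le (by linarith)) ?_ hinv
          exact mul_nonneg (by linarith) hB.le
      _ = 1/2 * ((m:ℝ) + 1) := by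
          have hB1 : B + 1 ≠ 0 := ne_of_gt (by linarith)
          field_simp
          ring
  rw [Real.norm_eq_abs, Real.norm_eq_abs,
    abs_of_nonneg (ubd_nonneg hα1 hρ hB.le hD.le _),
    abs_of_nonneg (ubd_nonneg hα1 hρ hB.le hD.le _),
    ubd_succ, ubd_succ, KSc_succ α ρ (m+1)]
  push_cast
  calc KSc α ρ (m+1) * Rq α ρ (m+1) * ((((m:ℝ) + 1) + 1) * B ^ (m+1) * D)
      = (KSc α ρ (m+1) * (B ^ m * D)) * (Rq α ρ (m+1) * ((((m:ℝ) + 1) + 1) * B)) := by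
        rw [pow_succ]; ring
    _ ≤ (KSc α ρ (m+1) * (B ^ m * D)) * (1/2 * ((m:ℝ) + 1)) := by
        refine mul_le_mul_of_nonneg_left key ?_
        exact mul_nonneg (KSc_pos hα1 hρ _).le (mul_nonneg (pow_nonneg hB.le m) hD.le)
    _ = 1/2 * (KSc α ρ (m+1) * (((m:ℝ) + 1) * B ^ m * D)) := by ring

private lemma KSc_summable {α ρ : ℝ} (hα0 : 0 < α) (hα1 : α < 1) (hρ : 0 < ρ) (z : ℝ) :
    Summable (fun n => KSc α ρ n * z ^ n) := by
  refine summable_of_ratio_norm_eventually_le (r := 1/2) (by norm_num) ?_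
  have hev : ∀ᶠ n : ℕ in atTop, Rq α ρ n * |z| < 1/2 := by
    have h := (Rq_tendsto hα0 hα1 hρ).mul_const |z|
    rw [zero_mul] at h
    exact h.eventually_lt_const (by norm_num)
  filter_upwards [hev] with n hn
  rw [Real.norm_eq_abs, Real.norm_eq_abs, pow_succ, KSc_succ]
  calc |KSc α ρ n * Rq α ρ n * (z ^ n * z)|
      = (Rq α ρ n * |z|) * |KSc α ρ n * z ^ n| := by
        simp only [abs_mul, abs_pow, abs_of_nonneg (KSc_pos hα1 hρ n).le,
          abs_of_nonneg (Rq_nonneg hα1 hρ n)]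
        ring
    _ ≤ 1/2 * |KSc α ρ n * z ^ n| := mul_le_mul_of_nonneg_right hn.le (abs_nonneg _)

/-- The Kilbas–Saigo function `E_{α,m,l}(z) = Σ_{n≥0} c_n z^n` with
`c_n = ∏_{k=0}^{n-1} Γ(1 + α(km + l)) / Γ(1 + α(km + l + 1))`. -/
noncomputable def kilbasSaigo (α m l : ℝ) (z : ℝ) : ℝ :=
  ∑' n : ℕ, (∏ k ∈ Finset.range n,
      Real.Gamma (1 + α * ((k : ℝ) * m + l)) / Real.Gamma (1 + α * ((k : ℝ) * m + l + 1))) * z ^ n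

/-- Corollary 3.2: series representation of the density of the fractional Weibull
distribution, obtained by differentiating `x ↦ E_{α,ρ/α,ρ/α-1}(-λ x^ρ)`. -/
theorem fractional_weibull_density
    (α lam ρ : ℝ) (hα : α ∈ Set.Ioo (0:ℝ) 1) (hlam : 0 < lam) (hρ : 0 < ρ)
    (x : ℝ) (hx : 0 < x) :
    DifferentiableAt ℝ (fun y : ℝ => kilbasSaigo α (ρ / α) (ρ / α - 1) (-(lam * y ^ ρ))) x
    ∧ Summable (fun n : ℕ =>
        (∏ j ∈ Finset.range (n + 1),
          Real.Gamma ((j : ℝ) * ρ + ρ + 1 - α) / Real.Gamma ((j : ℝ) * ρ + ρ))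
          * (-(lam * x ^ ρ)) ^ n / (ρ ^ n * (n.factorial : ℝ)))
    ∧ - deriv (fun y : ℝ => kilbasSaigo α (ρ / α) (ρ / α - 1) (-(lam * y ^ ρ))) x
        = lam * x ^ (ρ - 1) * ∑' n : ℕ,
            (∏ j ∈ Finset.range (n + 1),
              Real.Gamma ((j : ℝ) * ρ + ρ + 1 - α) / Real.Gamma ((j : ℝ) * ρ + ρ))
              * (-(lam * x ^ ρ)) ^ n / (ρ ^ n * (n.factorial : ℝ)) := by
  obtain ⟨hα0, hα1⟩ := hα
  have hx2 : (0:ℝ) < x / 2 := by linarith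
  have hx1 : (0:ℝ) < x + 1 := by linarith
  have hxt : x ∈ Set.Ioo (x/2) (x+1) := ⟨by linarith, by linarith⟩
  set B : ℝ := lam * (x + 1) ^ ρ with hB_def
  have hB : 0 < B := mul_pos hlam (Real.rpow_pos_of_pos hx1 ρ)
  set D : ℝ := lam * (ρ * ((x + 1) ^ ρ / (x / 2))) with hD_def
  have hD : 0 < D := mul_pos hlam (mul_pos hρ (div_pos (Real.rpow_pos_of_pos hx1 ρ) hx2))
  -- termwise derivatives
  have hgderiv : ∀ (n : ℕ) (y : ℝ), y ∈ Set.Ioo (x/2) (x+1) →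
      HasDerivAt (fun y : ℝ => KSc α ρ n * (-(lam * y ^ ρ)) ^ n)
        (KSc α ρ n * ((n : ℝ) * (-(lam * y ^ ρ)) ^ (n - 1) * (-(lam * (ρ * y ^ (ρ - 1)))))) y := by
    intro n y hy
    have hy0 : 0 < y := lt_trans hx2 hy.1
    have h0 : HasDerivAt (fun y : ℝ => y ^ ρ) (ρ * y ^ (ρ - 1)) y :=
      Real.hasDerivAt_rpow_const (Or.inl hy0.ne')
    exact (((h0.const_mul lam).neg).pow n).const_mul _
  -- uniform bound on the derivatives
  have hgbound : ∀ (n : ℕ) (y : ℝ), y ∈ Set.Ioo (x/2) (x+1) →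
      ‖KSc α ρ n * ((n : ℝ) * (-(lam * y ^ ρ)) ^ (n - 1) * (-(lam * (ρ * y ^ (ρ - 1)))))‖
        ≤ ubd α ρ B D n := by
    intro n y hy
    have hy0 : 0 < y := lt_trans hx2 hy.1
    have hy1 : y ≤ x + 1 := hy.2.le
    have hyρ : y ^ ρ ≤ (x + 1) ^ ρ := Real.rpow_le_rpow hy0.le hy1 hρ.le
    have h1 : lam * y ^ ρ ≤ B := by
      rw [hB_def]; exact mul_le_mul_of_nonneg_left hyρ hlam.le
    have h2 : lam * (ρ * y ^ (ρ - 1)) ≤ D := by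
      rw [hD_def]
      refine mul_le_mul_of_nonneg_left (mul_le_mul_of_nonneg_left ?_ hρ.le) hlam.le
      rw [Real.rpow_sub hy0, Real.rpow_one]
      exact div_le_div₀ (Real.rpow_nonneg hx1.le ρ) hyρ hx2 hy.1.le
    have hK := (KSc_pos hα1 hρ n).le
    have hyρ0 : (0:ℝ) ≤ lam * y ^ ρ := mul_nonneg hlam.le (Real.rpow_nonneg hy0.le ρ)
    have hd0 : (0:ℝ) ≤ lam * (ρ * y ^ (ρ - 1)) :=
      mul_nonneg hlam.le (mul_nonneg hρ.le (Real.rpow_nonneg hy0.le _))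
    rw [Real.norm_eq_abs, abs_mul, abs_mul, abs_mul, abs_pow, abs_neg, abs_neg,
      abs_of_nonneg hK, Nat.abs_cast, abs_of_nonneg hyρ0, abs_of_nonneg hd0]
    show KSc α ρ n * ((n : ℝ) * (lam * y ^ ρ) ^ (n - 1) * (lam * (ρ * y ^ (ρ - 1))))
      ≤ KSc α ρ n * ((n : ℝ) * B ^ (n - 1) * D)
    refine mul_le_mul_of_nonneg_left ?_ hK
    refine mul_le_mul (mul_le_mul_of_nonneg_left (pow_le_pow_left₀ hyρ0 h1 _)
      (Nat.cast_nonneg n)) h2 hd0 ?_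
    exact mul_nonneg (Nat.cast_nonneg n) (pow_nonneg hB.le _)
  have husum : Summable (ubd α ρ B D) := ubd_summable hα0 hα1 hρ hB hD
  have hsz : Summable (fun n => KSc α ρ n * (-(lam * x ^ ρ)) ^ n) :=
    KSc_summable hα0 hα1 hρ _
  have HD : HasDerivAt (fun y : ℝ => ∑' n : ℕ, KSc α ρ n * (-(lam * y ^ ρ)) ^ n)
      (∑' n : ℕ, KSc α ρ n *
        ((n : ℝ) * (-(lam * x ^ ρ)) ^ (n - 1) * (-(lam * (ρ * x ^ (ρ - 1)))))) x :=
    hasDerivAt_tsum_of_isPreconnected husum isOpen_Ioo isPreconnected_Ioo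
      hgderiv hgbound hxt hsz hxt
  have hfun : (fun y : ℝ => kilbasSaigo α (ρ / α) (ρ / α - 1) (-(lam * y ^ ρ)))
      = (fun y : ℝ => ∑' n : ℕ, KSc α ρ n * (-(lam * y ^ ρ)) ^ n) := by
    funext y
    unfold kilbasSaigo KSc
    refine tsum_congr fun n => ?_
    congr 1
    refine Finset.prod_congr rfl fun k _ => ?_
    rw [show 1 + α * ((k:ℝ) * (ρ/α) + (ρ/α - 1)) = (k:ℝ) * ρ + ρ + 1 - α from by
        field_simp; ring,
      show 1 + α * ((k:ℝ) * (ρ/α) + (ρ/α - 1) + 1) = (k:ℝ) * ρ + ρ + 1 from by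
        field_simp; ring]
  set z : ℝ := -(lam * x ^ ρ) with hz_def
  have hxρ1 : (0:ℝ) < lam * x ^ (ρ - 1) := mul_pos hlam (Real.rpow_pos_of_pos hx _)
  have hne : -(lam * x ^ (ρ - 1)) ≠ 0 := neg_ne_zero.mpr hxρ1.ne'
  have hg'sum : Summable (fun n : ℕ =>
      KSc α ρ n * ((n : ℝ) * z ^ (n - 1) * (-(lam * (ρ * x ^ (ρ - 1)))))) :=
    Summable.of_norm_bounded husum (fun n => hgbound n x hxt)
  have hrel : ∀ n : ℕ,
      KSc α ρ (n+1) * (((n+1 : ℕ) : ℝ) * z ^ (n + 1 - 1) * (-(lam * (ρ * x ^ (ρ - 1)))))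
        = (-(lam * x ^ (ρ - 1))) * (ρ * (((n : ℝ) + 1) * KSc α ρ (n+1)) * z ^ n) := by
    intro n
    simp only [Nat.add_sub_cancel]
    push_cast
    ring
  have hshift : Summable (fun n : ℕ =>
      KSc α ρ (n+1) * (((n+1 : ℕ) : ℝ) * z ^ (n + 1 - 1) * (-(lam * (ρ * x ^ (ρ - 1)))))) :=
    (summable_nat_add_iff 1).mpr hg'sum
  have hSsum : Summable (fun n : ℕ => ρ * (((n : ℝ) + 1) * KSc α ρ (n+1)) * z ^ n) := by
    refine ((hshift.mul_left (-(lam * x ^ (ρ - 1)))⁻¹)).congr fun n => ?_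
    rw [hrel n, inv_mul_cancel_left₀ hne]
  have hT : ∀ n : ℕ,
      (∏ j ∈ Finset.range (n + 1),
        Real.Gamma ((j : ℝ) * ρ + ρ + 1 - α) / Real.Gamma ((j : ℝ) * ρ + ρ))
        * z ^ n / (ρ ^ n * (n.factorial : ℝ))
      = ρ * (((n : ℝ) + 1) * KSc α ρ (n+1)) * z ^ n := by
    intro n
    rw [key_prod hα1 hρ n, pow_succ, Nat.factorial_succ]
    have hfact : ((n.factorial : ℕ) : ℝ) ≠ 0 := Nat.cast_ne_zero.mpr n.factorial_ne_zero
    have hρn : (ρ:ℝ) ^ n ≠ 0 := pow_ne_zero n hρ.ne'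
    push_cast
    field_simp
  refine ⟨by rw [hfun]; exact HD.differentiableAt, hSsum.congr fun n => (hT n).symm, ?_⟩
  have hderiv_eq : deriv (fun y : ℝ => kilbasSaigo α (ρ / α) (ρ / α - 1) (-(lam * y ^ ρ))) x
      = ∑' n : ℕ, KSc α ρ n *
          ((n : ℝ) * z ^ (n - 1) * (-(lam * (ρ * x ^ (ρ - 1))))) := by
    rw [hfun]; exact HD.deriv
  rw [hderiv_eq, Summable.tsum_eq_zero_add hg'sum, tsum_congr hrel, tsum_mul_left, tsum_congr hT]
  simp only [Nat.cast_zero, zero_mul, mul_zero, zero_add, KSc]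
  ring
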